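/- Let 𝔰 = 𝔤₅,₃₃^{-1,-1} ⊕ ℝ with structure equations (-e¹⁴, -e²⁵, e³⁴ + e³⁵, 0, 0, 0), i.e. brackets [e₁,e₄] = e₁, [e₂,e₅] = e₂, [e₃,e₄] = -e₃, [e₃,e₅] = -e₃. Every derivation D of 𝔰 whose one-dimensional extension 𝔰 ⋊_D ℝ is strongly unimodular has matrix form: De₁ = a₁e₁, De₂ = a₃e₂, De₃ = a₅e₃, De₄ = a₂e₁ + a₆e₃ + a₇e₆, De₅ = a₄e₂ + a₆e₃ + a₈e₆, De₆ = -(a₁+a₃+a₅)e₆, for some a₁,…,a₈ ∈ ℝ. -/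

import Mathlib

/-!
Statement 12: on 𝔰 = 𝔤₅,₃₃^{-1,-1} ⊕ ℝ ([e₁,e₄]=e₁, [e₂,e₅]=e₂, [e₃,e₄]=-e₃,
[e₃,e₅]=-e₃), every derivation D whose extension 𝔰 ⋊_D ℝ is strongly unimodular has
the matrix form De₁ = a₁e₁, De₂ = a₃e₂, De₃ = a₅e₃, De₄ = a₂e₁ + a₆e₃ + a₇e₆,
De₅ = a₄e₂ + a₆e₃ + a₈e₆, De₆ = -(a₁+a₃+a₅)e₆.
-/

noncomputable section

abbrev V6 := Fin 6 → ℝ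
abbrev V7 := Fin 7 → ℝ

def e6 (i : Fin 6) : V6 := Pi.single i 1

/-- the span of all brackets of elements of `A` with elements of `B` -/
def brSub {V : Type*} [AddCommGroup V] [Module ℝ V] (br : V → V → V)
    (A B : Submodule ℝ V) : Submodule ℝ V :=
  Submodule.span ℝ {z | ∃ a ∈ A, ∃ b ∈ B, z = br a b}

/-- the descending central series of a subalgebra `N`: `N⁰ = N`, `N^{k+1} = [N, N^k]` -/
def lcs {V : Type*} [AddCommGroup V] [Module ℝ V] (br : V → V → V)
    (N : Submodule ℝ V) : ℕ → Submodule ℝ V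
  | 0 => N
  | k + 1 => brSub br N (lcs br N k)

def IsIdeal {V : Type*} [AddCommGroup V] [Module ℝ V] (br : V → V → V)
    (N : Submodule ℝ V) : Prop :=
  ∀ x : V, ∀ y ∈ N, br x y ∈ N ∧ br y x ∈ N

def IsNilpotentIdeal {V : Type*} [AddCommGroup V] [Module ℝ V] (br : V → V → V)
    (N : Submodule ℝ V) : Prop :=
  IsIdeal br N ∧ ∃ k, lcs br N k = ⊥

/-- `N` is the nilradical: the maximal nilpotent ideal -/
def IsNilradical {V : Type*} [AddCommGroup V] [Module ℝ V] (br : V → V → V)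
    (N : Submodule ℝ V) : Prop :=
  IsNilpotentIdeal br N ∧ ∀ M : Submodule ℝ V, IsNilpotentIdeal br M → M ≤ N

/-- Strong unimodularity: for every `X`, the endomorphism `ad_X = br X ·` induces a
traceless map on each quotient `𝔫^i/𝔫^{i+1}` of the descending central series of the
nilradical `𝔫`; equivalently (for an operator preserving both terms), its traces on
`𝔫^i` and on `𝔫^{i+1}` agree. -/
def StronglyUnimodular {V : Type*} [AddCommGroup V] [Module ℝ V] (br : V → V → V) : Prop :=
  ∀ N : Submodule ℝ V, IsNilradical br N →
    ∀ (X : V) (L : V →ₗ[ℝ] V), (∀ y, L y = br X y) →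
      ∀ (i : ℕ) (h : ∀ y ∈ lcs br N i, L y ∈ lcs br N i)
        (h' : ∀ y ∈ lcs br N (i + 1), L y ∈ lcs br N (i + 1)),
        LinearMap.trace ℝ _ (L.restrict h) = LinearMap.trace ℝ _ (L.restrict h')

/-- the one-dimensional extension `𝔰 ⋊_D ℝ`, with `[z, x] = D x` for the generator
`z = e₇` of the `ℝ`-factor. -/
def brExt (br : V6 → V6 → V6) (D : V6 →ₗ[ℝ] V6) : V7 → V7 → V7 := fun x y =>
  Fin.snoc
    (br (Fin.init x) (Fin.init y) + x (Fin.last 6) • D (Fin.init y)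
      - y (Fin.last 6) • D (Fin.init x))
    (0 : ℝ)

/-- Lie bracket of `𝔤₅,₃₃^{-1,-1} ⊕ ℝ`. -/
def br533 : V6 → V6 → V6 := fun x y =>
  (x 0 * y 3 - x 3 * y 0) • e6 0 + (x 1 * y 4 - x 4 * y 1) • e6 1
    + (-(x 2 * y 3 - x 3 * y 2) - (x 2 * y 4 - x 4 * y 2)) • e6 2

-- ### auxiliary lemmas
theorem e6_app (j i : Fin 6) : e6 j i = if i = j then 1 else 0 := by
  simp [e6, Pi.single_apply]

theorem br_0 (x y : V6) : br533 x y 0 = x 0 * y 3 - x 3 * y 0 := by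
  simp [br533, e6, Pi.single_apply]
theorem br_1 (x y : V6) : br533 x y 1 = x 1 * y 4 - x 4 * y 1 := by
  simp [br533, e6, Pi.single_apply]
theorem br_2 (x y : V6) : br533 x y 2 = -(x 2 * y 3 - x 3 * y 2) - (x 2 * y 4 - x 4 * y 2) := by
  simp [br533, e6, Pi.single_apply]
theorem br_3 (x y : V6) : br533 x y 3 = 0 := by simp [br533, e6, Pi.single_apply]
theorem br_4 (x y : V6) : br533 x y 4 = 0 := by simp [br533, e6, Pi.single_apply]
theorem br_5 (x y : V6) : br533 x y 5 = 0 := by simp [br533, e6, Pi.single_apply]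

theorem ia0 (x : V7) : Fin.init x 0 = x 0 := rfl
theorem ia1 (x : V7) : Fin.init x 1 = x 1 := rfl
theorem ia2 (x : V7) : Fin.init x 2 = x 2 := rfl
theorem ia3 (x : V7) : Fin.init x 3 = x 3 := rfl
theorem ia4 (x : V7) : Fin.init x 4 = x 4 := rfl
theorem ia5 (x : V7) : Fin.init x 5 = x 5 := rfl
theorem sn0 (v : V6) (c : ℝ) : (Fin.snoc v c : V7) 0 = v 0 := rfl
theorem sn1 (v : V6) (c : ℝ) : (Fin.snoc v c : V7) 1 = v 1 := rfl
theorem sn2 (v : V6) (c : ℝ) : (Fin.snoc v c : V7) 2 = v 2 := rfl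
theorem sn3 (v : V6) (c : ℝ) : (Fin.snoc v c : V7) 3 = v 3 := rfl
theorem sn4 (v : V6) (c : ℝ) : (Fin.snoc v c : V7) 4 = v 4 := rfl
theorem sn5 (v : V6) (c : ℝ) : (Fin.snoc v c : V7) 5 = v 5 := rfl
theorem sn6 (v : V6) (c : ℝ) : (Fin.snoc v c : V7) 6 = c := rfl
theorem la7 (x : V7) : x (Fin.last 6) = x 6 := rfl

theorem eig_zero {V : Type*} [AddCommGroup V] [Module ℝ V] (br : V → V → V)
    (M : Submodule ℝ V) (hM : IsNilpotentIdeal br M) {m : V} (hm : m ∈ M)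
    {v : V} (hv : v ≠ 0) {c : ℝ} (hbr : br m v = c • v) : c = 0 := by
  by_contra hc
  have hvM : v ∈ M := by
    have h2 := (hM.1 v m hm).2
    rw [hbr] at h2
    have h3 := M.smul_mem c⁻¹ h2
    rwa [smul_smul, inv_mul_cancel₀ hc, one_smul] at h3
  have hall : ∀ k, v ∈ lcs br M k := by
    intro k
    induction k with
    | zero => exact hvM
    | succ k ih =>
      have hbrm : br m v ∈ lcs br M (k + 1) :=
        Submodule.subset_span ⟨m, hm, v, ih, rfl⟩
      rw [hbr] at hbrm
      have h3 := (lcs br M (k + 1)).smul_mem c⁻¹ hbrm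
      rwa [smul_smul, inv_mul_cancel₀ hc, one_smul] at h3
  obtain ⟨k, hk⟩ := hM.2
  have hvk := hall k
  rw [hk] at hvk
  exact hv (by simpa using hvk)

def N0 : Submodule ℝ V7 where
  carrier := {x | x 3 = 0 ∧ x 4 = 0 ∧ x 6 = 0}
  add_mem' := by
    rintro a b ⟨ha3, ha4, ha6⟩ ⟨hb3, hb4, hb6⟩
    refine ⟨?_, ?_, ?_⟩ <;> simp_all
  zero_mem' := ⟨rfl, rfl, rfl⟩
  smul_mem' := by
    rintro c x ⟨h3, h4, h6⟩
    refine ⟨?_, ?_, ?_⟩ <;> simp_all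

theorem mem_N0 {x : V7} : x ∈ N0 ↔ x 3 = 0 ∧ x 4 = 0 ∧ x 6 = 0 := Iff.rfl

def emb (v : Fin 4 → ℝ) : V7 :=
  Fin.snoc (v 0 • e6 0 + v 1 • e6 1 + v 2 • e6 2 + v 3 • e6 5) 0

theorem emb_0 (v) : emb v 0 = v 0 := by rw [emb, sn0]; simp [e6_app]
theorem emb_1 (v) : emb v 1 = v 1 := by rw [emb, sn1]; simp [e6_app]
theorem emb_2 (v) : emb v 2 = v 2 := by rw [emb, sn2]; simp [e6_app]
theorem emb_3 (v) : emb v 3 = 0 := by rw [emb, sn3]; simp [e6_app]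
theorem emb_4 (v) : emb v 4 = 0 := by rw [emb, sn4]; simp [e6_app]
theorem emb_5 (v) : emb v 5 = v 3 := by rw [emb, sn5]; simp [e6_app]
theorem emb_6 (v) : emb v 6 = 0 := by rw [emb, sn6]

theorem snoc_add (v w : V6) : (Fin.snoc (v + w) (0:ℝ) : V7) = Fin.snoc v 0 + Fin.snoc w 0 := by
  funext i
  induction i using Fin.lastCases with
  | last => simp only [Pi.add_apply, Pi.smul_apply, Fin.snoc_last]; simp
  | cast j => simp

theorem snoc_smul (v : V6) (c : ℝ) :
    (Fin.snoc (c • v) (0:ℝ) : V7) = c • (Fin.snoc v (0:ℝ) : V7) := by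
  funext i
  induction i using Fin.lastCases with
  | last => simp only [Pi.add_apply, Pi.smul_apply, Fin.snoc_last]; simp
  | cast j => simp

def phiN0 : (Fin 4 → ℝ) ≃ₗ[ℝ] N0 where
  toFun v := ⟨emb v, emb_3 v, emb_4 v, emb_6 v⟩
  map_add' u v := by
    apply Subtype.ext
    show emb (u + v) = emb u + emb v
    rw [emb, emb, emb,
      show (u + v) 0 • e6 0 + (u + v) 1 • e6 1 + (u + v) 2 • e6 2 + (u + v) 3 • e6 5
        = (u 0 • e6 0 + u 1 • e6 1 + u 2 • e6 2 + u 3 • e6 5)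
          + (v 0 • e6 0 + v 1 • e6 1 + v 2 • e6 2 + v 3 • e6 5) by
        simp only [Pi.add_apply, add_smul]; abel]
    exact snoc_add _ _
  map_smul' c v := by
    apply Subtype.ext
    show emb (c • v) = c • emb v
    rw [emb, emb,
      show (c • v) 0 • e6 0 + (c • v) 1 • e6 1 + (c • v) 2 • e6 2 + (c • v) 3 • e6 5
        = c • (v 0 • e6 0 + v 1 • e6 1 + v 2 • e6 2 + v 3 • e6 5) by
        simp only [Pi.smul_apply, smul_smul, smul_add, smul_eq_mul]]
    exact snoc_smul _ _
  invFun n := ![n.1 0, n.1 1, n.1 2, n.1 5]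
  left_inv v := by
    funext i
    fin_cases i <;> simp [emb_0, emb_1, emb_2, emb_5]
  right_inv n := by
    apply Subtype.ext
    obtain ⟨x, hx3, hx4, hx6⟩ := n
    show emb _ = x
    funext i
    fin_cases i <;>
      simp_all [emb_0, emb_1, emb_2, emb_3, emb_4, emb_5, emb_6]

def bN0 : Module.Basis (Fin 4) ℝ N0 := (Pi.basisFun ℝ (Fin 4)).map phiN0

def Lext (D : V6 →ₗ[ℝ] V6) : V7 →ₗ[ℝ] V7 where
  toFun y := Fin.snoc (D (Fin.init y)) 0
  map_add' x y := by
    have h : Fin.init (x + y) = Fin.init x + Fin.init y := rfl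
    funext i
    induction i using Fin.lastCases with
    | last => simp only [Pi.add_apply, Pi.smul_apply, Fin.snoc_last]; simp
    | cast j => simp [h]
  map_smul' c x := by
    have h : Fin.init (c • x) = c • Fin.init x := rfl
    funext i
    induction i using Fin.lastCases with
    | last => simp only [Pi.add_apply, Pi.smul_apply, Fin.snoc_last]; simp
    | cast j => simp [h]

theorem br533_zero_left (y : V6) : br533 0 y = 0 := by
  funext i
  simp [br533, e6]

theorem Lext_eq (D : V6 →ₗ[ℝ] V6) (y : V7) :
    Lext D y = brExt br533 D (Pi.single (6 : Fin 7) (1:ℝ)) y := by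
  have h1 : Fin.init (Pi.single (6 : Fin 7) (1:ℝ) : V7) = 0 := by
    funext j
    simp [Fin.init, Pi.single_apply, Fin.ext_iff]
    omega
  have h2 : (Pi.single (6 : Fin 7) (1:ℝ) : V7) (Fin.last 6) = 1 := by
    rw [show Fin.last 6 = 6 from rfl]; simp
  show _ = Fin.snoc _ _
  rw [h1, h2, br533_zero_left]
  simp [Lext]

theorem init_single (k : Fin 6) :
    Fin.init (Pi.single k.castSucc (1:ℝ) : V7) = e6 k := by
  funext j
  simp [Fin.init, Pi.single_apply, Fin.ext_iff, e6_app]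

theorem single_castSucc_last (k : Fin 6) :
    (Pi.single k.castSucc (1:ℝ) : V7) (Fin.last 6) = 0 := by
  rw [Pi.single_apply, if_neg]
  simp [Fin.ext_iff]
  omega

theorem snoc_single (k : Fin 6) :
    (Fin.snoc (e6 k) (0:ℝ) : V7) = Pi.single k.castSucc (1:ℝ) := by
  funext i
  induction i using Fin.lastCases with
  | last =>
    rw [Fin.snoc_last, Pi.single_apply, if_neg (by simp [Fin.ext_iff]; omega)]
  | cast j => simp [Pi.single_apply, Fin.ext_iff, e6_app, eq_comm]

theorem single_cs_ne_zero (k : Fin 6) : (Pi.single k.castSucc (1:ℝ) : V7) ≠ 0 := by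
  intro h
  have := congrFun h k.castSucc
  simp at this

/-- the key "eigenvector" computation : the bracket of any `m` with an embedded
eigen basis vector is a multiple of it -/
theorem adk (D : V6 →ₗ[ℝ] V6) (k : Fin 6) (m : V7) (c b : ℝ)
    (hDk : D (e6 k) = c • e6 k)
    (hbr : br533 (Fin.init m) (e6 k) = b • e6 k) :
    brExt br533 D m (Pi.single k.castSucc (1:ℝ) : V7)
      = (b + m 6 * c) • (Pi.single k.castSucc (1:ℝ) : V7) := by
  rw [brExt]
  rw [init_single, single_castSucc_last, show m (Fin.last 6) = m 6 from rfl, hbr, hDk,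
    zero_smul, sub_zero, smul_smul, ← add_smul, snoc_smul, snoc_single]


theorem strongly_unimodular_derivations_g533 (D : V6 →ₗ[ℝ] V6)
    (hD : ∀ x y : V6, D (br533 x y) = br533 (D x) y + br533 x (D y))
    (hsu : StronglyUnimodular (brExt br533 D)) :
    ∃ a : Fin 8 → ℝ,
      D (e6 0) = a 0 • e6 0 ∧
      D (e6 1) = a 2 • e6 1 ∧
      D (e6 2) = a 4 • e6 2 ∧
      D (e6 3) = a 1 • e6 0 + a 5 • e6 2 + a 6 • e6 5 ∧
      D (e6 4) = a 3 • e6 1 + a 5 • e6 2 + a 7 • e6 5 ∧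
      D (e6 5) = (-(a 0 + a 2 + a 4)) • e6 5 := by
  classical
  have key : ∀ (j k : Fin 6) (i : Fin 6), D (br533 (e6 j) (e6 k)) i
      = br533 (D (e6 j)) (e6 k) i + br533 (e6 j) (D (e6 k)) i :=
    fun j k i => congrFun (hD _ _) i
  have h03_0 := key 0 3 0; simp [br533, e6_app] at h03_0
  have h03_1 := key 0 3 1; simp [br533, e6_app] at h03_1
  have h03_2 := key 0 3 2; simp [br533, e6_app] at h03_2
  have h03_3 := key 0 3 3; simp [br533, e6_app] at h03_3
  have h03_4 := key 0 3 4; simp [br533, e6_app] at h03_4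
  have h03_5 := key 0 3 5; simp [br533, e6_app] at h03_5
  have h14_0 := key 1 4 0; simp [br533, e6_app] at h14_0
  have h14_1 := key 1 4 1; simp [br533, e6_app] at h14_1
  have h14_2 := key 1 4 2; simp [br533, e6_app] at h14_2
  have h14_3 := key 1 4 3; simp [br533, e6_app] at h14_3
  have h14_4 := key 1 4 4; simp [br533, e6_app] at h14_4
  have h14_5 := key 1 4 5; simp [br533, e6_app] at h14_5
  have h23_0 := key 2 3 0; simp [br533, e6_app] at h23_0
  have h23_1 := key 2 3 1; simp [br533, e6_app] at h23_1
  have h23_2 := key 2 3 2; simp [br533, e6_app] at h23_2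
  have h23_3 := key 2 3 3; simp [br533, e6_app] at h23_3
  have h23_4 := key 2 3 4; simp [br533, e6_app] at h23_4
  have h23_5 := key 2 3 5; simp [br533, e6_app] at h23_5
  have h24_2 := key 2 4 2; simp [br533, e6_app] at h24_2
  have h34_0 := key 3 4 0; simp [br533, e6_app] at h34_0
  have h34_1 := key 3 4 1; simp [br533, e6_app] at h34_1
  have h34_2 := key 3 4 2; simp [br533, e6_app] at h34_2
  have h05_0 := key 0 5 0; simp [br533, e6_app] at h05_0
  have h15_1 := key 1 5 1; simp [br533, e6_app] at h15_1
  have h35_0 := key 3 5 0; simp [br533, e6_app] at h35_0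
  have h35_2 := key 3 5 2; simp [br533, e6_app] at h35_2
  have h45_1 := key 4 5 1; simp [br533, e6_app] at h45_1
  -- normalized facts
  have d20 : D (e6 0) 2 = 0 := by linarith
  have d21 : D (e6 1) 2 = 0 := by linarith
  have d02 : D (e6 2) 0 = 0 := by linarith
  have d12 : D (e6 2) 1 = 0 := h23_1
  have d43 : D (e6 3) 4 = 0 := by linarith
  have d34 : D (e6 4) 3 = 0 := by linarith
  have d24 : D (e6 4) 2 = D (e6 3) 2 := by linarith
  have d13 : D (e6 3) 1 = 0 := h34_1.symm
  have d04 : D (e6 4) 0 = 0 := h34_0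
  have d35 : D (e6 5) 3 = 0 := h05_0.symm
  have d45 : D (e6 5) 4 = 0 := h15_1.symm
  have d05 : D (e6 5) 0 = 0 := h35_0
  have d25 : D (e6 5) 2 = 0 := h35_2.symm
  have d15 : D (e6 5) 1 = 0 := h45_1
  -- column forms
  have hc0 : D (e6 0) = D (e6 0) 0 • e6 0 := by
    funext i
    fin_cases i <;> simp [e6_app, h03_1, d20, h03_3, h03_4, h03_5]
  have hc1 : D (e6 1) = D (e6 1) 1 • e6 1 := by
    funext i
    fin_cases i <;> simp [e6_app, h14_0, d21, h14_3, h14_4, h14_5]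
  have hc2 : D (e6 2) = D (e6 2) 2 • e6 2 := by
    funext i
    fin_cases i <;> simp [e6_app, d02, d12, h23_3, h23_4, h23_5]
  have hc5 : D (e6 5) = D (e6 5) 5 • e6 5 := by
    funext i
    fin_cases i <;> simp [e6_app, d05, d15, d25, d35, d45]
  -- row vanishing
  have e6fun : ∀ i : Fin 6, (fun j => if i = j then (1:ℝ) else 0) = e6 i := by
    intro i
    funext j
    rw [e6_app]
    simp [eq_comm]
  have Dsum : ∀ x : V6, D x = ∑ j : Fin 6, x j • D (e6 j) := by
    intro x
    rw [LinearMap.pi_apply_eq_sum_univ D x]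
    simp only [e6fun]
  have hrow3 : ∀ x : V6, D x 3 = 0 := by
    intro x
    rw [Dsum, Finset.sum_apply]
    simp [Fin.sum_univ_six, h03_3, h14_3, h23_3, h03_0, d34, d35]
  have hrow4 : ∀ x : V6, D x 4 = 0 := by
    intro x
    rw [Dsum, Finset.sum_apply]
    simp [Fin.sum_univ_six, h03_4, h14_4, h23_4, d43, h14_1, d45]
  -- the main scalar fact, via strong unimodularity
  have hmain : D (e6 5) 5 = -(D (e6 0) 0 + D (e6 1) 1 + D (e6 2) 2) := by
    by_cases hcase : D (e6 5) 5 = -(D (e6 0) 0 + D (e6 1) 1 + D (e6 2) 2)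
    · exact hcase
    exfalso
    -- N0 is an ideal, in fact all brackets land in N0
    have hbrmem : ∀ x y : V7, brExt br533 D x y ∈ N0 := by
      intro x y
      refine ⟨?_, ?_, ?_⟩
      · show (Fin.snoc _ _ : V7) 3 = 0
        rw [sn3]
        simp [br_3, hrow3]
      · show (Fin.snoc _ _ : V7) 4 = 0
        rw [sn4]
        simp [br_4, hrow4]
      · exact sn6 _ _
    -- brackets of two elements of N0 vanish
    have hbr0 : ∀ x ∈ N0, ∀ y ∈ N0, brExt br533 D x y = 0 := by
      rintro x ⟨hx3, hx4, hx6⟩ y ⟨hy3, hy4, hy6⟩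
      funext i
      have hx6' : x (Fin.last 6) = 0 := hx6
      have hy6' : y (Fin.last 6) = 0 := hy6
      fin_cases i <;>
        simp [brExt, sn0, sn1, sn2, sn3, sn4, sn5, sn6, hx6', hy6',
          br_0, br_1, br_2, br_3, br_4, br_5, ia0, ia1, ia2, ia3, ia4, ia5,
          hx3, hx4, hy3, hy4, hx6, hy6]
    have hlcs1 : lcs (brExt br533 D) N0 1 = ⊥ := by
      refine le_antisymm ?_ bot_le
      show brSub (brExt br533 D) N0 (lcs (brExt br533 D) N0 0) ≤ ⊥
      rw [brSub, Submodule.span_le]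
      rintro z ⟨a, ha, b, hb, rfl⟩
      simp only [SetLike.mem_coe, Submodule.mem_bot]
      exact hbr0 a ha b hb
    -- maximality
    have hmax : ∀ M : Submodule ℝ V7, IsNilpotentIdeal (brExt br533 D) M → M ≤ N0 := by
      intro M hM m hm
      have hb0 : br533 (Fin.init m) (e6 0) = (-(m 3)) • e6 0 := by
        funext i
        fin_cases i <;>
          simp [br_0, br_1, br_2, br_3, br_4, br_5, e6_app, ia0, ia1, ia2, ia3, ia4, ia5]
      have hb1 : br533 (Fin.init m) (e6 1) = (-(m 4)) • e6 1 := by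
        funext i
        fin_cases i <;>
          simp [br_0, br_1, br_2, br_3, br_4, br_5, e6_app, ia0, ia1, ia2, ia3, ia4, ia5]
      have hb2 : br533 (Fin.init m) (e6 2) = (m 3 + m 4) • e6 2 := by
        funext i
        fin_cases i <;>
          simp [br_0, br_1, br_2, br_3, br_4, br_5, e6_app, ia0, ia1, ia2, ia3, ia4, ia5]
      have hb5 : br533 (Fin.init m) (e6 5) = (0:ℝ) • e6 5 := by
        funext i
        fin_cases i <;>
          simp [br_0, br_1, br_2, br_3, br_4, br_5, e6_app, ia0, ia1, ia2, ia3, ia4, ia5]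
      have c0 := eig_zero (brExt br533 D) M hM hm (single_cs_ne_zero 0)
        (adk D 0 m (D (e6 0) 0) (-(m 3)) hc0 hb0)
      have c1 := eig_zero (brExt br533 D) M hM hm (single_cs_ne_zero 1)
        (adk D 1 m (D (e6 1) 1) (-(m 4)) hc1 hb1)
      have c2 := eig_zero (brExt br533 D) M hM hm (single_cs_ne_zero 2)
        (adk D 2 m (D (e6 2) 2) (m 3 + m 4) hc2 hb2)
      have c5 := eig_zero (brExt br533 D) M hM hm (single_cs_ne_zero 5)
        (adk D 5 m (D (e6 5) 5) 0 hc5 hb5)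
      have hm6 : m 6 = 0 := by
        by_contra h6
        have hmul : m 6 * (D (e6 0) 0 + D (e6 1) 1 + D (e6 2) 2) = 0 := by
          linear_combination c0 + c1 + c2
        have hmul5 : m 6 * D (e6 5) 5 = 0 := by linear_combination c5
        have hs := (mul_eq_zero.mp hmul).resolve_left h6
        have hz := (mul_eq_zero.mp hmul5).resolve_left h6
        exact hcase (by rw [hz, hs]; ring)
      rw [hm6] at c0 c1
      have hm3 : m 3 = 0 := by linarith
      have hm4 : m 4 = 0 := by linarith
      exact ⟨hm3, hm4, hm6⟩
    have hrad : IsNilradical (brExt br533 D) N0 :=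
      ⟨⟨fun x y _ => ⟨hbrmem x y, hbrmem y x⟩, 1, hlcs1⟩, hmax⟩
    have h0 : ∀ y ∈ lcs (brExt br533 D) N0 0, Lext D y ∈ lcs (brExt br533 D) N0 0 :=
      fun y _ => ⟨hrow3 _, hrow4 _, rfl⟩
    have h1 : ∀ y ∈ lcs (brExt br533 D) N0 (0 + 1), Lext D y ∈ lcs (brExt br533 D) N0 (0 + 1) := by
      intro y hy
      have hy' : y ∈ (⊥ : Submodule ℝ V7) := hlcs1 ▸ hy
      rw [Submodule.mem_bot] at hy'
      subst hy'
      rw [map_zero]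
      exact Submodule.zero_mem _
    have htr := hsu N0 hrad (Pi.single (6:Fin 7) (1:ℝ)) (Lext D) (Lext_eq D) 0 h0 h1
    -- trace on lcs 1 vanishes
    have hss : Subsingleton ↥(lcs (brExt br533 D) N0 (0 + 1)) := by
      rw [show lcs (brExt br533 D) N0 (0 + 1) = ⊥ from hlcs1]
      infer_instance
    rw [Subsingleton.elim ((Lext D).restrict h1) 0, map_zero] at htr
    -- trace on N0
    have hrepr : ∀ (x : N0) (j : Fin 4), bN0.repr x j = ![x.1 0, x.1 1, x.1 2, x.1 5] j := by
      intro x j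
      show ((Pi.basisFun ℝ (Fin 4)).repr (phiN0.symm x)) j = _
      rw [Pi.basisFun_repr]
      rfl
    have hbv : ∀ j : Fin 4, (bN0 j).1 = emb (Pi.single j 1) := by
      intro j
      rw [bN0, Module.Basis.map_apply, Pi.basisFun_apply]
      rfl
    have htr0 : LinearMap.trace ℝ (↥N0) ((Lext D).restrict h0)
        = D (e6 0) 0 + D (e6 1) 1 + D (e6 2) 2 + D (e6 5) 5 := by
      rw [LinearMap.trace_eq_matrix_trace ℝ bN0 ((Lext D).restrict h0), Matrix.trace,
        Fin.sum_univ_four]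
      have hentry : ∀ j : Fin 4, (LinearMap.toMatrix bN0 bN0 ((Lext D).restrict h0)).diag j
          = ![(Lext D (bN0 j).1) 0, (Lext D (bN0 j).1) 1,
              (Lext D (bN0 j).1) 2, (Lext D (bN0 j).1) 5] j := by
        intro j
        rw [Matrix.diag_apply, LinearMap.toMatrix_apply, hrepr]
        rfl
      rw [hentry 0, hentry 1, hentry 2, hentry 3, hbv 0, hbv 1, hbv 2, hbv 3]
      have hLemb : ∀ v : Fin 4 → ℝ,
          Lext D (emb v)
            = (Fin.snoc (D (v 0 • e6 0 + v 1 • e6 1 + v 2 • e6 2 + v 3 • e6 5)) 0 : V7) := by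
        intro v
        show (Fin.snoc (D (Fin.init (emb v))) 0 : V7) = _
        rw [emb, Fin.init_snoc]
      rw [hLemb, hLemb, hLemb, hLemb]
      simp [sn0, sn1, sn2, sn5, Pi.single_apply]
    have hsum : D (e6 0) 0 + D (e6 1) 1 + D (e6 2) 2 + D (e6 5) 5 = 0 := by
      rw [← htr0]
      exact htr
    exact hcase (by linarith)
  -- assemble the answer
  have he3 : D (e6 3) = D (e6 3) 0 • e6 0 + D (e6 3) 2 • e6 2 + D (e6 3) 5 • e6 5 := by
    funext i
    fin_cases i <;> simp [e6_app, d13, h03_0, d43]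
  have he4 : D (e6 4) = D (e6 4) 1 • e6 1 + D (e6 3) 2 • e6 2 + D (e6 4) 5 • e6 5 := by
    funext i
    fin_cases i <;> simp [e6_app, d04, d24, d34, h14_1]
  have he5 : D (e6 5) = (-(D (e6 0) 0 + D (e6 1) 1 + D (e6 2) 2)) • e6 5 := by
    rw [hc5, hmain]
  exact ⟨![D (e6 0) 0, D (e6 3) 0, D (e6 1) 1, D (e6 4) 1, D (e6 2) 2, D (e6 3) 2,
      D (e6 3) 5, D (e6 4) 5], hc0, hc1, hc2, he3, he4, he5⟩

end
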